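/- arXiv:1311.1408 — 5 statements merged into one kernel-verified Lean document; each statement's English description precedes it below -/
import Mathlib

section
/- In the dual of c_0 (identified with ℓ_1), let E = { e_n* : n ∈ ℕ } be the set of coordinate functionals and F = {0}. Then E and F are each w*-LRC, but E ∪ F is not w*-LRC. -/
open ZeroAtInfty

/-- The weak-* topology on the dual of `X`: the topology induced by pointwise
evaluation. -/
noncomputable def wstarTopology (X : Type*) [NormedAddCommGroup X] [NormedSpace ℝ X] :
    TopologicalSpace (X →L[ℝ] ℝ) :=
  TopologicalSpace.induced (fun (f : X →L[ℝ] ℝ) (x : X) => f x) inferInstance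

/-- A set `E ⊆ X*` is w*-LRC if every point of `E` has a weak-*-open neighbourhood `U`
such that the norm closure of `E ∩ U` is norm compact. -/
def WStarLRC {X : Type*} [NormedAddCommGroup X] [NormedSpace ℝ X]
    (E : Set (X →L[ℝ] ℝ)) : Prop :=
  ∀ y ∈ E, ∃ U : Set (X →L[ℝ] ℝ),
    @IsOpen _ (wstarTopology X) U ∧ y ∈ U ∧ IsCompact (closure (E ∩ U))

/-- The `n`-th coordinate functional on `c₀`. -/
noncomputable def coordFunctional (n : ℕ) : C₀(ℕ, ℝ) →L[ℝ] ℝ :=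
  LinearMap.mkContinuous
    { toFun := fun f => f n
      map_add' := fun f g => rfl
      map_smul' := fun c f => rfl } 1
    (fun f => by
      simpa using (f.toBCF.norm_coe_le_norm n).trans (le_of_eq f.norm_toBCF_eq_norm))

/-! Each `coordFunctional n` is weak-* isolated in the range: the weak-* open set
`{f | 1/2 < f (c0Single n)}` meets it only in `coordFunctional n`. On the other hand
`coordFunctional n → 0` weak-*, because elements of `c₀` vanish at infinity, while the
coordinate functionals are pairwise at norm distance at least `1`. So every weak-* neighbourhood
of `0` contains a tail of a separated sequence, which no norm-compact set can contain. -/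

open Filter Topology

lemma not_frequently_mem_of_isCompact_of_separated {M : Type*} [PseudoMetricSpace M]
    {K : Set M} (hK : IsCompact K) {x : ℕ → M} {ε : ℝ} (hε : 0 < ε)
    (hsep : Pairwise fun n m => ε ≤ dist (x n) (x m)) : ¬ ∃ᶠ n in atTop, x n ∈ K := by
  intro hfreq
  obtain ⟨_, -, φ, hφ, hlim⟩ := hK.tendsto_subseq' hfreq
  obtain ⟨N, hN⟩ := Metric.cauchySeq_iff'.1 hlim.cauchySeq ε hε
  exact (hN (N + 1) N.le_succ).not_ge (@hsep (φ (N + 1)) (φ N) (hφ.injective.ne N.succ_ne_self))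

section WStar

variable {X : Type*} [NormedAddCommGroup X] [NormedSpace ℝ X]

lemma isOpen_wstar_setOf_lt (x : X) (c : ℝ) :
    IsOpen[wstarTopology X] {f : X →L[ℝ] ℝ | c < f x} :=
  isOpen_induced (isOpen_lt continuous_const (continuous_apply x))

lemma tendsto_wstar_iff {ι : Type*} {l : Filter ι} {φ : ι → X →L[ℝ] ℝ} {ψ : X →L[ℝ] ℝ} :
    Tendsto φ l (@nhds _ (wstarTopology X) ψ) ↔ ∀ x, Tendsto (fun i => φ i x) l (𝓝 (ψ x)) := by
  rw [wstarTopology, nhds_induced, tendsto_comap_iff, tendsto_pi_nhds]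
  rfl

lemma wStarLRC_of_finite_inter {E : Set (X →L[ℝ] ℝ)}
    (h : ∀ y ∈ E, ∃ U, IsOpen[wstarTopology X] U ∧ y ∈ U ∧ (E ∩ U).Finite) : WStarLRC E := by
  intro y hy
  obtain ⟨U, hU, hyU, hfin⟩ := h y hy
  refine ⟨U, hU, hyU, ?_⟩
  rw [hfin.isClosed.closure_eq]
  exact hfin.isCompact

lemma Set.Finite.wStarLRC {E : Set (X →L[ℝ] ℝ)} (hE : E.Finite) : WStarLRC E :=
  wStarLRC_of_finite_inter fun _ _ => ⟨Set.univ, @isOpen_univ _ (wstarTopology X), trivial,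
    hE.inter_of_left _⟩

lemma not_wStarLRC_of_tendsto_of_separated {E : Set (X →L[ℝ] ℝ)} {y : X →L[ℝ] ℝ}
    {φ : ℕ → X →L[ℝ] ℝ} {ε : ℝ} (hε : 0 < ε)
    (hy : y ∈ E) (hφE : ∀ n, φ n ∈ E) (hlim : Tendsto φ atTop (@nhds _ (wstarTopology X) y))
    (hsep : Pairwise fun n m => ε ≤ dist (φ n) (φ m)) : ¬ WStarLRC E := by
  intro hE
  obtain ⟨U, hU, hyU, hK⟩ := hE y hy
  refine not_frequently_mem_of_isCompact_of_separated hK hε hsep (Eventually.frequently ?_)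
  filter_upwards [hlim (@IsOpen.mem_nhds _ (wstarTopology X) _ _ hU hyU)] with n hn
  exact subset_closure ⟨hφE n, hn⟩

end WStar

noncomputable def c0Single (n : ℕ) : C₀(ℕ, ℝ) :=
  ⟨⟨Pi.single n 1, continuous_of_discreteTopology⟩, by
    rw [cocompact_eq_cofinite]
    refine tendsto_const_nhds.congr' ?_
    filter_upwards [(Set.finite_singleton n).eventually_cofinite_notMem] with m hm
    simp_all⟩

lemma c0Single_apply (n m : ℕ) : c0Single n m = (Pi.single n 1 : ℕ → ℝ) m := rfl

lemma norm_c0Single_le (n : ℕ) : ‖c0Single n‖ ≤ 1 := by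
  rw [← ZeroAtInftyContinuousMap.norm_toBCF_eq_norm]
  refine (BoundedContinuousFunction.norm_le zero_le_one).2 fun m => ?_
  show ‖c0Single n m‖ ≤ 1
  rcases eq_or_ne m n with rfl | h <;> simp [c0Single_apply, *]

lemma coordFunctional_c0Single (n m : ℕ) :
    coordFunctional m (c0Single n) = (Pi.single n 1 : ℕ → ℝ) m := rfl

lemma one_le_dist_coordFunctional {n m : ℕ} (h : n ≠ m) :
    1 ≤ dist (coordFunctional n) (coordFunctional m) := by
  have hval : (coordFunctional n - coordFunctional m) (c0Single n) = 1 := by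
    simp [coordFunctional_c0Single, h.symm]
  calc (1 : ℝ) = ‖(coordFunctional n - coordFunctional m) (c0Single n)‖ := by simp [hval]
    _ ≤ ‖coordFunctional n - coordFunctional m‖ * 1 :=
      ContinuousLinearMap.le_opNorm_of_le _ (norm_c0Single_le n)
    _ = dist (coordFunctional n) (coordFunctional m) := by
      rw [mul_one, dist_eq_norm (coordFunctional n) (coordFunctional m)]

lemma tendsto_coordFunctional_wstar_zero :
    Tendsto coordFunctional atTop (@nhds _ (wstarTopology _) 0) := by
  refine tendsto_wstar_iff.2 fun f => ?_
  have := f.zero_at_infty'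
  rwa [cocompact_eq_cofinite, Nat.cofinite_eq_atTop] at this

lemma range_coordFunctional_inter_setOf_lt (n : ℕ) :
    Set.range coordFunctional ∩ {f | 1 / 2 < f (c0Single n)} = {coordFunctional n} := by
  ext f
  constructor
  · rintro ⟨⟨m, rfl⟩, hm⟩
    rcases eq_or_ne m n with rfl | h
    · rfl
    · norm_num [coordFunctional_c0Single, h] at hm
  · rintro rfl
    exact ⟨⟨n, rfl⟩, by norm_num [coordFunctional_c0Single]⟩

/-- In the dual of `c₀`, the set `E` of coordinate functionals and the set `{0}` are
each w*-LRC, but their union `E ∪ {0}` is not w*-LRC. -/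
theorem coord_functionals_union_zero_not_wStarLRC :
    WStarLRC (Set.range coordFunctional) ∧
    WStarLRC ({0} : Set (C₀(ℕ, ℝ) →L[ℝ] ℝ)) ∧
    ¬ WStarLRC (Set.range coordFunctional ∪ {0}) := by
  refine ⟨?_, (Set.finite_singleton 0).wStarLRC, ?_⟩
  · refine wStarLRC_of_finite_inter ?_
    rintro _ ⟨n, rfl⟩
    refine ⟨_, isOpen_wstar_setOf_lt (c0Single n) (1 / 2), ?_, ?_⟩
    · norm_num [coordFunctional_c0Single]
    · rw [range_coordFunctional_inter_setOf_lt]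
      exact Set.finite_singleton _
  · exact not_wStarLRC_of_tendsto_of_separated one_pos (Or.inr rfl)
      (fun n => Or.inl ⟨n, rfl⟩) tendsto_coordFunctional_wstar_zero
      fun _ _ => one_le_dist_coordFunctional
end

section
/- Let X and Y be Banach spaces, and let N ⊆ B_{X*} and M ⊆ B_{Y*} be boundaries of X and Y respectively. Then the set { f ⊗ g : f ∈ N, g ∈ M } is a boundary of the injective tensor product X ⊗_ε Y: for every u ∈ X ⊗_ε Y with ||u|| = 1 there exist f ∈ N, g ∈ M with (f ⊗ g)(u) = 1. -/
/-!
Realize `u` as an operator `X* → Y`. It is weak*-continuous on the unit ball of `X*`, being a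
uniform limit of finite-rank weak*-continuous operators, so by Banach–Alaoglu it attains its norm
at some `F` there. Pick `g ∈ M` with `g (u F) = 1`. Again by approximation, and since `X` is
complete, `g ∘ u` is evaluation at some `x ∈ X`; then `F x = 1` and `‖g ∘ u‖ ≤ 1` force
`‖x‖ = 1`, and `f ∈ N` with `f x = 1` gives `g (u f) = f x = 1`.
-/

open NormedSpace

/-- The rank-one operator `X* → Y`, `f ↦ f x • y`, representing the elementary tensor
`x ⊗ y`.  The closed linear span of such operators in `B(X*, Y)` is an isometric copy
of the injective tensor product `X ⊗_ε Y` (the operator norm being the injective tensor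
norm). -/
noncomputable def elemTensor {X Y : Type*} [NormedAddCommGroup X] [NormedSpace ℝ X]
    [NormedAddCommGroup Y] [NormedSpace ℝ Y] (x : X) (y : Y) : (X →L[ℝ] ℝ) →L[ℝ] Y :=
  (NormedSpace.inclusionInDoubleDual ℝ X x).smulRight y

noncomputable abbrev elemTensorSpan (X Y : Type*) [NormedAddCommGroup X] [NormedSpace ℝ X]
    [NormedAddCommGroup Y] [NormedSpace ℝ Y] : Submodule ℝ ((X →L[ℝ] ℝ) →L[ℝ] Y) :=
  Submodule.span ℝ {T | ∃ x y, T = elemTensor x y}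

namespace ElemTensor

variable {X Y : Type*} [NormedAddCommGroup X] [NormedSpace ℝ X]
    [NormedAddCommGroup Y] [NormedSpace ℝ Y]

theorem isClosed_range_inclusionInDoubleDual [CompleteSpace X] :
    IsClosed (Set.range (inclusionInDoubleDual ℝ X)) :=
  (inclusionInDoubleDualLi ℝ (E := X)).isometry.isUniformInducing.isComplete_range.isClosed

theorem exists_forall_apply_comp_eq_apply [CompleteSpace X] {u : (X →L[ℝ] ℝ) →L[ℝ] Y}
    (hu : u ∈ closure (elemTensorSpan X Y : Set ((X →L[ℝ] ℝ) →L[ℝ] Y)))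
    (g : Y →L[ℝ] ℝ) : ∃ x : X, ∀ f : X →L[ℝ] ℝ, g (u f) = f x := by
  let compG := ContinuousLinearMap.compL ℝ (X →L[ℝ] ℝ) Y ℝ g
  let S := (LinearMap.range (inclusionInDoubleDual ℝ X).toLinearMap).comap compG.toLinearMap
  have hS : IsClosed (S : Set ((X →L[ℝ] ℝ) →L[ℝ] Y)) :=
    isClosed_range_inclusionInDoubleDual.preimage compG.continuous
  have hspan : elemTensorSpan X Y ≤ S := by
    refine Submodule.span_le.2 ?_
    rintro _ ⟨x, y, rfl⟩
    exact ⟨g y • x, by ext f; simp [compG, elemTensor, mul_comm]⟩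
  obtain ⟨x, hx⟩ := closure_minimal hspan hS hu
  exact ⟨x, fun f => (DFunLike.congr_fun hx f).symm⟩

theorem continuous_toStrongDual_of_mem_span {w : (X →L[ℝ] ℝ) →L[ℝ] Y}
    (hw : w ∈ elemTensorSpan X Y) :
    Continuous fun f : WeakDual ℝ X => w (WeakDual.toStrongDual f) := by
  induction hw using Submodule.span_induction with
  | mem T hT =>
    obtain ⟨x, y, rfl⟩ := hT
    exact (WeakDual.eval_continuous x).smul continuous_const
  | zero => exact continuous_const
  | add a b _ _ ha hb => exact ha.add hb
  | smul c a _ ha => exact ha.const_smul c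

theorem isClosed_setOf_continuousOn_closedBall :
    IsClosed {v : (X →L[ℝ] ℝ) →L[ℝ] Y | ContinuousOn (fun f : WeakDual ℝ X =>
      v (WeakDual.toStrongDual f)) (WeakDual.toStrongDual ⁻¹' Metric.closedBall 0 1)} := by
  refine isClosed_of_closure_subset fun v hv => ?_
  refine continuousOn_of_uniform_approx_of_continuousOn fun U hU => ?_
  obtain ⟨ε, hε, hεU⟩ := Metric.mem_uniformity_dist.1 hU
  obtain ⟨w, hw, hvw⟩ :=
    (Metric.mem_closure_iff (α := (X →L[ℝ] ℝ) →L[ℝ] Y)).1 hv ε hε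
  refine ⟨_, hw, fun f hf => hεU ?_⟩
  have hf1 : ‖WeakDual.toStrongDual f‖ ≤ 1 := by simpa using hf
  calc dist (v (WeakDual.toStrongDual f)) (w (WeakDual.toStrongDual f))
      = ‖(v - w) (WeakDual.toStrongDual f)‖ := by rw [dist_eq_norm, sub_apply]
    _ ≤ ‖v - w‖ * 1 := (v - w).le_of_opNorm_le_of_le le_rfl hf1
    _ < ε := by rw [mul_one]; exact dist_eq_norm v w ▸ hvw

theorem continuousOn_closedBall_of_mem_closure_span {u : (X →L[ℝ] ℝ) →L[ℝ] Y}
    (hu : u ∈ closure (elemTensorSpan X Y : Set ((X →L[ℝ] ℝ) →L[ℝ] Y))) :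
    ContinuousOn (fun f : WeakDual ℝ X => u (WeakDual.toStrongDual f))
      (WeakDual.toStrongDual ⁻¹' Metric.closedBall 0 1) :=
  closure_minimal (fun _ hw => (continuous_toStrongDual_of_mem_span hw).continuousOn)
    isClosed_setOf_continuousOn_closedBall hu

theorem exists_norm_le_one_norm_apply_eq {u : (X →L[ℝ] ℝ) →L[ℝ] Y}
    (hu : u ∈ closure (elemTensorSpan X Y : Set ((X →L[ℝ] ℝ) →L[ℝ] Y))) :
    ∃ F : X →L[ℝ] ℝ, ‖F‖ ≤ 1 ∧ ‖u F‖ = ‖u‖ := by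
  obtain ⟨F, hF, hmax⟩ := (WeakDual.isCompact_closedBall (0 : X →L[ℝ] ℝ) 1).exists_isMaxOn
    ⟨0, by simp⟩ (continuousOn_closedBall_of_mem_closure_span hu).norm
  have hF1 : ‖WeakDual.toStrongDual F‖ ≤ 1 := by simpa using hF
  refine ⟨_, hF1, le_antisymm (u.le_of_opNorm_le_of_le le_rfl hF1 |>.trans_eq (mul_one _)) ?_⟩
  refine u.opNorm_le_of_unit_norm (norm_nonneg _) fun f hf => ?_
  exact hmax (a := StrongDual.toWeakDual f) (by simp [hf])

end ElemTensor

open ElemTensor in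
theorem boundary_injectiveTensorProduct_general {X Y : Type*}
    [NormedAddCommGroup X] [NormedSpace ℝ X] [CompleteSpace X]
    [NormedAddCommGroup Y] [NormedSpace ℝ Y]
    (N : Set (X →L[ℝ] ℝ)) (M : Set (Y →L[ℝ] ℝ))
    (hM1 : ∀ g ∈ M, ‖g‖ ≤ 1)
    (hN : ∀ x : X, ‖x‖ = 1 → ∃ f ∈ N, f x = 1)
    (hM : ∀ y : Y, ‖y‖ = 1 → ∃ g ∈ M, g y = 1)
    (u : (X →L[ℝ] ℝ) →L[ℝ] Y)
    (hu : u ∈ closure (↑(Submodule.span ℝ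
      {T : (X →L[ℝ] ℝ) →L[ℝ] Y | ∃ x y, T = elemTensor x y}) :
        Set ((X →L[ℝ] ℝ) →L[ℝ] Y)))
    (hu1 : ‖u‖ = 1) :
    ∃ f ∈ N, ∃ g ∈ M, g (u f) = 1 := by
  obtain ⟨F, hF1, huF⟩ := exists_norm_le_one_norm_apply_eq hu
  obtain ⟨g, hgM, hgF⟩ := hM (u F) (huF.trans hu1)
  obtain ⟨x, hx⟩ := exists_forall_apply_comp_eq_apply hu g
  have hx1 : ‖x‖ = 1 := by
    refine le_antisymm (norm_le_dual_bound ℝ x zero_le_one fun f => ?_) ?_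
    · calc ‖f x‖ = ‖g (u f)‖ := by rw [hx]
        _ ≤ 1 * (1 * ‖f‖) :=
          g.le_of_opNorm_le_of_le (hM1 g hgM) (u.le_of_opNorm_le_of_le hu1.le le_rfl)
        _ = 1 * ‖f‖ := by rw [one_mul]
    · calc (1 : ℝ) = ‖F x‖ := by rw [← hx, hgF, norm_one]
        _ ≤ 1 * ‖x‖ := F.le_of_opNorm_le hF1 x
        _ = ‖x‖ := one_mul _
  obtain ⟨f, hfN, hfx⟩ := hN x hx1
  exact ⟨f, hfN, g, hgM, (hx f).trans hfx⟩

/-- If `N ⊆ B_{X*}` and `M ⊆ B_{Y*}` are boundaries of the Banach spaces `X` and `Y`,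
then `{f ⊗ g : f ∈ N, g ∈ M}` is a boundary of the injective tensor product
`X ⊗_ε Y`: every `u` of norm one in `X ⊗_ε Y` admits `f ∈ N`, `g ∈ M` with
`(f ⊗ g)(u) = g (u f) = 1`. -/
theorem boundary_injectiveTensorProduct {X Y : Type*}
    [NormedAddCommGroup X] [NormedSpace ℝ X] [CompleteSpace X]
    [NormedAddCommGroup Y] [NormedSpace ℝ Y] [CompleteSpace Y]
    (N : Set (X →L[ℝ] ℝ)) (M : Set (Y →L[ℝ] ℝ))
    (hN1 : ∀ f ∈ N, ‖f‖ ≤ 1) (hM1 : ∀ g ∈ M, ‖g‖ ≤ 1)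
    (hN : ∀ x : X, ‖x‖ = 1 → ∃ f ∈ N, f x = 1)
    (hM : ∀ y : Y, ‖y‖ = 1 → ∃ g ∈ M, g y = 1)
    (u : (X →L[ℝ] ℝ) →L[ℝ] Y)
    (hu : u ∈ closure (↑(Submodule.span ℝ
      {T : (X →L[ℝ] ℝ) →L[ℝ] Y | ∃ x y, T = elemTensor x y}) :
        Set ((X →L[ℝ] ℝ) →L[ℝ] Y)))
    (hu1 : ‖u‖ = 1) :
    ∃ f ∈ N, ∃ g ∈ M, g (u f) = 1 :=
  boundary_injectiveTensorProduct_general N M hM1 hN hM u hu hu1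
end

section
/- Let w = (w_n) be a sequence of strictly positive reals with w_0 = 1, w ∈ c_0, and Σ w_n = ∞, let A be a set, and let d_*(w,1,A) be the canonical predual of the Lorentz space d(w,1,A). Then for every y in the unit sphere of d_*(w,1,A) there exists a finite set σ ⊆ A such that ||P_σ(y)|| = 1, where P_σ is the canonical coordinate projection onto coordinates in σ. -/
open scoped BigOperators

variable {A : Type*} [DecidableEq A]

/-- `ȳ_k = sup { (Σ_{i<k} |y aᵢ|) / (Σ_{i<k} wᵢ) : a₀, …, a_{k-1} distinct in A }`. -/
noncomputable def lorentzBar (w : ℕ → ℝ) (y : A → ℝ) (k : ℕ) : ℝ :=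
  sSup {r : ℝ | ∃ s : Finset A, s.card = k ∧
    r = (∑ a ∈ s, |y a|) / (∑ i ∈ Finset.range k, w i)}

/-- The norm of the canonical predual `d_*(w,1,A)` of the Lorentz space `d(w,1,A)`:
`‖y‖ = sup_k ȳ_k`. -/
noncomputable def lorentzPredualNorm (w : ℕ → ℝ) (y : A → ℝ) : ℝ :=
  ⨆ k, lorentzBar w y k

/-- The coordinate projection `P_σ` onto a finite set of coordinates `σ`. -/
noncomputable def coordProj (σ : Finset A) (y : A → ℝ) : A → ℝ :=
  fun a => if a ∈ σ then y a else 0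

/-!
Since `ȳ → 0` and `ȳ₀ = 0`, the supremum `‖y‖ = 1` is a maximum `ȳ_k = 1`. Testing `ȳ` on
`k`-element subsets of `{ε ≤ |y|}` against the Cesàro means of `w → 0` shows that `|y| → 0` along
the cofinite filter, so `|y|` has a set `σ` of `k` largest values, and exchanging elements shows
that `σ` maximizes `∑_{a ∈ s} |y a|` over all `k`-element sets `s`. Then `(P_σ y)‾_k = ȳ_k = 1`,
while `|P_σ y| ≤ |y|` gives `(P_σ y)‾ ≤ ȳ ≤ 1` everywhere.
-/

open Filter Topology Finset

section TopSums

variable {ι : Type*} {g : ι → ℝ}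

theorem exists_isMaxOn_of_tendsto_cofinite_zero (hg : Tendsto g cofinite (𝓝 0)) {s : Set ι}
    {a₀ : ι} (ha₀ : a₀ ∈ s) (hga₀ : 0 ≤ g a₀) : ∃ a ∈ s, IsMaxOn g s a := by
  by_cases hpos : ∃ b ∈ s, 0 < g b
  · obtain ⟨b, hbs, hb⟩ := hpos
    have hfin : {x | x ∈ s ∧ g b ≤ g x}.Finite :=
      ((eventually_cofinite.1 (hg.eventually (gt_mem_nhds hb))).subset fun x hx => by
        simpa using hx.2)
    obtain ⟨a, ⟨has, -⟩, ha⟩ := Set.exists_max_image _ g hfin ⟨b, hbs, le_rfl⟩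
    refine ⟨a, has, fun x hx => ?_⟩
    rcases le_total (g b) (g x) with hbx | hxb
    · exact ha x ⟨hx, hbx⟩
    · exact hxb.trans (ha b ⟨hbs, le_rfl⟩)
  · push Not at hpos
    exact ⟨a₀, ha₀, fun x hx => (hpos x hx).trans hga₀⟩

theorem sum_le_sum_of_card_eq_of_forall_le [DecidableEq ι] {s t : Finset ι}
    (hcard : t.card = s.card) (hts : ∀ b ∈ t, ∀ a ∈ s, g b ≤ g a) :
    ∑ b ∈ t, g b ≤ ∑ a ∈ s, g a := by
  rcases s.eq_empty_or_nonempty with rfl | hs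
  · simp [card_eq_zero.1 hcard]
  calc ∑ b ∈ t, g b ≤ t.card • s.inf' hs g :=
        sum_le_card_nsmul _ _ _ fun b hb => (s.le_inf'_iff hs g).2 (hts b hb)
    _ = s.card • s.inf' hs g := by rw [hcard]
    _ ≤ ∑ a ∈ s, g a := card_nsmul_le_sum _ _ _ fun a ha => s.inf'_le g ha

theorem sum_le_sum_of_forall_notMem_le [DecidableEq ι] {s t : Finset ι}
    (hs : ∀ a ∈ s, ∀ b ∉ s, g b ≤ g a) (hcard : t.card = s.card) :
    ∑ b ∈ t, g b ≤ ∑ a ∈ s, g a := by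
  rw [← sum_inter_add_sum_sdiff t s, ← sum_inter_add_sum_sdiff s t, inter_comm]
  gcongr 1
  exact sum_le_sum_of_card_eq_of_forall_le (card_sdiff_comm hcard)
    fun b hb a ha => hs a (mem_sdiff.1 ha).1 b (mem_sdiff.1 hb).2

theorem exists_card_eq_forall_notMem_le (hg : Tendsto g cofinite (𝓝 0)) (hg0 : ∀ a, 0 ≤ g a)
    (k : ℕ) (hk : ∃ t : Finset ι, t.card = k) :
    ∃ s : Finset ι, s.card = k ∧ ∀ a ∈ s, ∀ b ∉ s, g b ≤ g a := by
  classical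
  induction k with
  | zero => exact ⟨∅, rfl, by simp⟩
  | succ k ih =>
    obtain ⟨t, ht⟩ := hk
    obtain ⟨s, hs, hstop⟩ := ih ((exists_subset_card_eq (by omega : k ≤ t.card)).imp
      fun _ => And.right)
    obtain ⟨b, hbt, hbs⟩ := exists_mem_notMem_of_card_lt_card (by omega : s.card < t.card)
    obtain ⟨a, has, hamax⟩ :=
      exists_isMaxOn_of_tendsto_cofinite_zero hg (s := {x | x ∉ s}) hbs (hg0 b)
    refine ⟨insert a s, by rw [card_insert_of_notMem has, hs], fun x hx y hy => ?_⟩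
    rw [mem_insert, not_or] at hy
    rcases mem_insert.1 hx with rfl | hxs
    · exact hamax hy.2
    · exact hstop x hxs y hy.2

theorem exists_card_eq_forall_sum_le (hg : Tendsto g cofinite (𝓝 0)) (hg0 : ∀ a, 0 ≤ g a)
    {k : ℕ} (hk : ∃ t : Finset ι, t.card = k) :
    ∃ s : Finset ι, s.card = k ∧ ∀ t : Finset ι, t.card = k → ∑ b ∈ t, g b ≤ ∑ a ∈ s, g a := by
  classical
  obtain ⟨s, hs, hstop⟩ := exists_card_eq_forall_notMem_le hg hg0 k hk
  exact ⟨s, hs, fun t ht => sum_le_sum_of_forall_notMem_le hstop (ht.trans hs.symm)⟩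

end TopSums

section Lorentz

variable {α : Type*} {w : ℕ → ℝ} {y z : α → ℝ} {k : ℕ} {M c : ℝ}

theorem lorentzBar_zero : lorentzBar w y 0 = 0 := by
  simp [lorentzBar]

theorem lorentzBar_nonneg (hw : ∀ n, 0 ≤ w n) : 0 ≤ lorentzBar w y k :=
  Real.sSup_nonneg <| by
    rintro _ ⟨s, -, rfl⟩
    exact div_nonneg (sum_nonneg fun a _ => abs_nonneg (y a)) (sum_nonneg fun i _ => hw i)

theorem lorentzBar_le (hc : 0 ≤ c)
    (h : ∀ s : Finset α, s.card = k → (∑ a ∈ s, |y a|) / ∑ i ∈ range k, w i ≤ c) :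
    lorentzBar w y k ≤ c :=
  Real.sSup_le (by rintro _ ⟨s, hs, rfl⟩; exact h s hs) hc

theorem div_le_lorentzBar (hw : ∀ n, 0 ≤ w n) (hM : ∀ a, |y a| ≤ M) {s : Finset α}
    (hs : s.card = k) : (∑ a ∈ s, |y a|) / ∑ i ∈ range k, w i ≤ lorentzBar w y k := by
  refine le_csSup ⟨k * M / ∑ i ∈ range k, w i, ?_⟩ ⟨s, hs, rfl⟩
  rintro _ ⟨t, rfl, rfl⟩
  refine div_le_div_of_nonneg_right ?_ (sum_nonneg fun i _ => hw i)
  simpa using sum_le_card_nsmul t (fun a => |y a|) M fun a _ => hM a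

theorem lorentzBar_mono (hw : ∀ n, 0 ≤ w n) (hM : ∀ a, |y a| ≤ M)
    (hzy : ∀ a, |z a| ≤ |y a|) : lorentzBar w z k ≤ lorentzBar w y k :=
  lorentzBar_le (lorentzBar_nonneg hw) fun _ hs =>
    (div_le_div_of_nonneg_right (sum_le_sum fun a _ => hzy a) (sum_nonneg fun i _ => hw i)).trans
      (div_le_lorentzBar hw hM hs)

theorem lorentzBar_le_div_of_forall_sum_le (hw : ∀ n, 0 ≤ w n) {σ : Finset α}
    (hσ : ∀ s : Finset α, s.card = σ.card → ∑ a ∈ s, |y a| ≤ ∑ a ∈ σ, |y a|) :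
    lorentzBar w y σ.card ≤ (∑ a ∈ σ, |y a|) / ∑ i ∈ range σ.card, w i :=
  lorentzBar_le (div_nonneg (sum_nonneg fun a _ => abs_nonneg (y a)) (sum_nonneg fun i _ => hw i))
    fun s hs => div_le_div_of_nonneg_right (hσ s hs) (sum_nonneg fun i _ => hw i)

theorem exists_card_eq_of_lorentzBar_ne_zero (h : lorentzBar w y k ≠ 0) :
    ∃ t : Finset α, t.card = k := by
  by_contra! ht
  refine h ((congrArg sSup ?_).trans Real.sSup_empty)
  ext r
  simpa using fun s hs => absurd hs (ht s)

theorem exists_abs_le_of_lorentzBar_ne_zero (hw : ∀ n, 0 < w n) (h : lorentzBar w y k ≠ 0) :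
    ∃ M, ∀ a, |y a| ≤ M := by
  classical
  have hk : k ≠ 0 := by rintro rfl; exact h lorentzBar_zero
  obtain ⟨t, ht⟩ := exists_card_eq_of_lorentzBar_ne_zero h
  obtain ⟨C, hC⟩ := not_not.1 (mt Real.sSup_of_not_bddAbove h)
  have hW : 0 < ∑ i ∈ range k, w i := sum_pos (fun i _ => hw i) (nonempty_range_iff.2 hk)
  refine ⟨C * ∑ i ∈ range k, w i, fun a => ?_⟩
  obtain ⟨s, has, -, hs⟩ := exists_subsuperset_card_eq
    (singleton_subset_iff.2 (mem_insert_self a t)) (by simpa using Nat.one_le_iff_ne_zero.2 hk)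
    (ht ▸ card_le_card (subset_insert a t))
  calc |y a| ≤ ∑ b ∈ s, |y b| :=
        single_le_sum (fun b _ => abs_nonneg (y b)) (has (mem_singleton_self a))
    _ ≤ C * ∑ i ∈ range k, w i := (div_le_iff₀ hW).1 (hC ⟨s, hs, rfl⟩)

theorem tendsto_abs_cofinite_zero_of_lorentzBar_le (hw : ∀ n, 0 < w n)
    (hw_zero : Tendsto w atTop (𝓝 0)) (hM : ∀ a, |y a| ≤ M) (hc : ∀ k, lorentzBar w y k ≤ c) :
    Tendsto (fun a => |y a|) cofinite (𝓝 0) := by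
  refine Metric.tendsto_nhds.2 fun ε hε => eventually_cofinite.2 ?_
  by_contra hinf
  -- `k` points with `ε ≤ |y|` give `ε k ≤ c ∑_{i<k} w i`, against the Cesàro means of `w → 0`
  obtain ⟨k, hk, hk_pos⟩ := (((hw_zero.cesaro.const_mul c).eventually
    (gt_mem_nhds (by simpa using hε))).and (eventually_ge_atTop 1)).exists
  obtain ⟨t, hts, htk⟩ := Set.Infinite.exists_subset_card_eq hinf k
  have hW : 0 < ∑ i ∈ range k, w i := sum_pos (fun i _ => hw i) (nonempty_range_iff.2 (by omega))
  have hlow : ε * k ≤ ∑ a ∈ t, |y a| := by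
    simpa [htk, mul_comm] using card_nsmul_le_sum t (fun a => |y a|) ε fun a ha => by
      simpa using hts ha
  have hup : ∑ a ∈ t, |y a| ≤ c * ∑ i ∈ range k, w i :=
    (div_le_iff₀ hW).1 ((div_le_lorentzBar (fun n => (hw n).le) hM htk).trans (hc k))
  have hkR : (0 : ℝ) < k := by exact_mod_cast hk_pos
  rw [← mul_assoc, mul_comm c, mul_assoc, inv_mul_lt_iff₀ hkR] at hk
  linarith

theorem exists_forall_lorentzBar_le (hy : Tendsto (lorentzBar w y) atTop (𝓝 0)) :
    ∃ k, ∀ n, lorentzBar w y n ≤ lorentzBar w y k := by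
  obtain ⟨k, -, hk⟩ := exists_isMaxOn_of_tendsto_cofinite_zero (Nat.cofinite_eq_atTop ▸ hy)
    (Set.mem_univ 0) lorentzBar_zero.ge
  exact ⟨k, fun n => hk (Set.mem_univ n)⟩

theorem lorentzPredualNorm_eq_lorentzBar (h : ∀ n, lorentzBar w y n ≤ lorentzBar w y k) :
    lorentzPredualNorm w y = lorentzBar w y k :=
  le_antisymm (ciSup_le h) (le_ciSup ⟨_, Set.forall_mem_range.2 h⟩ k)

theorem abs_coordProj_le [DecidableEq α] (σ : Finset α) (y : α → ℝ) (a : α) :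
    |coordProj σ y a| ≤ |y a| := by
  unfold coordProj
  split_ifs <;> simp

theorem lorentzPredualNorm_coordProj_eq [DecidableEq α] (hw : ∀ n, 0 ≤ w n)
    (hM : ∀ a, |y a| ≤ M) (hc : ∀ k, lorentzBar w y k ≤ c) {σ : Finset α}
    (hσ : c ≤ (∑ a ∈ σ, |y a|) / ∑ i ∈ range σ.card, w i) :
    lorentzPredualNorm w (coordProj σ y) = c := by
  have hbar : ∀ k, lorentzBar w (coordProj σ y) k ≤ c := fun k =>
    (lorentzBar_mono hw hM (abs_coordProj_le σ y)).trans (hc k)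
  refine le_antisymm (ciSup_le hbar) (le_ciSup_of_le ⟨c, Set.forall_mem_range.2 hbar⟩ σ.card ?_)
  calc c ≤ (∑ a ∈ σ, |y a|) / ∑ i ∈ range σ.card, w i := hσ
    _ = (∑ a ∈ σ, |coordProj σ y a|) / ∑ i ∈ range σ.card, w i := by
        congr 1
        exact sum_congr rfl fun a ha => by simp [coordProj, ha]
    _ ≤ lorentzBar w (coordProj σ y) σ.card :=
        div_le_lorentzBar hw (fun a => (abs_coordProj_le σ y a).trans (hM a)) rfl

end Lorentz

theorem lorentz_predual_norm_attained_on_finite_projection_general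
    (w : ℕ → ℝ) (hw_pos : ∀ n, 0 < w n)
    (hw_c0 : Filter.Tendsto w Filter.atTop (nhds 0))
    (y : A → ℝ)
    (hy_mem : Filter.Tendsto (lorentzBar w y) Filter.atTop (nhds 0))
    (hy_norm : lorentzPredualNorm w y = 1) :
    ∃ σ : Finset A, lorentzPredualNorm w (coordProj σ y) = 1 := by
  have hw : ∀ n, 0 ≤ w n := fun n => (hw_pos n).le
  obtain ⟨k, hk⟩ := exists_forall_lorentzBar_le hy_mem
  have hk_one : lorentzBar w y k = 1 := (lorentzPredualNorm_eq_lorentzBar hk).symm.trans hy_norm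
  have hbar : ∀ n, lorentzBar w y n ≤ 1 := hk_one ▸ hk
  have hk_ne : lorentzBar w y k ≠ 0 := hk_one ▸ one_ne_zero
  obtain ⟨M, hM⟩ := exists_abs_le_of_lorentzBar_ne_zero hw_pos hk_ne
  obtain ⟨σ, hσ, hσ_max⟩ := exists_card_eq_forall_sum_le
    (tendsto_abs_cofinite_zero_of_lorentzBar_le hw_pos hw_c0 hM hbar) (fun a => abs_nonneg (y a))
    (exists_card_eq_of_lorentzBar_ne_zero hk_ne)
  refine ⟨σ, lorentzPredualNorm_coordProj_eq hw hM hbar ?_⟩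
  rw [← hk_one, ← hσ]
  exact lorentzBar_le_div_of_forall_sum_le hw fun s hs => hσ_max s (hs.trans hσ)

/-- For every `y` in the unit sphere of the predual `d_*(w,1,A)` of a Lorentz sequence
space (`w` strictly positive, `w₀ = 1`, `w ∈ c₀ \ ℓ₁`), there is a finite set
`σ ⊆ A` with `‖P_σ y‖ = 1`. -/
theorem lorentz_predual_norm_attained_on_finite_projection
    (w : ℕ → ℝ) (hw_pos : ∀ n, 0 < w n) (hw0 : w 0 = 1)
    (hw_c0 : Filter.Tendsto w Filter.atTop (nhds 0)) (hw_not_l1 : ¬ Summable w)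
    (y : A → ℝ)
    (hy_mem : Filter.Tendsto (lorentzBar w y) Filter.atTop (nhds 0))
    (hy_norm : lorentzPredualNorm w y = 1) :
    ∃ σ : Finset A, lorentzPredualNorm w (coordProj σ y) = 1 :=
  lorentz_predual_norm_attained_on_finite_projection_general w hw_pos hw_c0 y hy_mem hy_norm
end

section
/- Let X be a Banach space with a monotone unconditional basis (e_i)_{i∈I} and suppose that for each x in the unit sphere of X there is a finite set σ ⊆ I with ||P_σ(x)|| = 1, where P_σ is the basis projection onto coordinates in σ. Then, with H_n = { h ∈ B_{X*} : |supp(h)| ≤ n } where supp(h) = { i : h(e_i) ≠ 0 }, the set H = ⋃_{n=0}^∞ H_n is a boundary of X. -/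
/-! A norming functional of `P_σ x` (Hahn–Banach), composed with `P_σ`, norms `x`: it has norm
at most one because `‖P_σ‖ ≤ 1`, and it kills every `e_j` with `j ∉ σ`. -/

theorem exists_dual_comp_eq_one {𝕜 E F : Type*} [RCLike 𝕜] [NormedAddCommGroup E]
    [NormedSpace 𝕜 E] [NormedAddCommGroup F] [NormedSpace 𝕜 F] {P : E →L[𝕜] F} (hP : ‖P‖ ≤ 1)
    {x : E} (hx : ‖P x‖ = 1) : ∃ f : F →L[𝕜] 𝕜, ‖f.comp P‖ ≤ 1 ∧ f (P x) = 1 := by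
  obtain ⟨f, hf, hfx⟩ := exists_dual_vector 𝕜 (P x) (norm_ne_zero_iff.mp (by simp [hx]))
  refine ⟨f, ?_, by simp [hfx, hx]⟩
  calc ‖f.comp P‖ ≤ ‖f‖ * ‖P‖ := f.opNorm_comp_le P
    _ ≤ 1 := by rw [hf, one_mul]; exact hP

section BasisProjection

variable {X : Type*} [NormedAddCommGroup X] [NormedSpace ℝ X] {I : Type*}
  (e : I → X) (estar : I → (X →L[ℝ] ℝ))

noncomputable def basisProjection (σ : Finset I) : X →L[ℝ] X :=
  ∑ i ∈ σ, (estar i).smulRight (e i)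

theorem basisProjection_apply (σ : Finset I) (x : X) :
    basisProjection e estar σ x = ∑ i ∈ σ, estar i x • e i := by
  simp [basisProjection]

theorem opNorm_basisProjection_le
    (hmono : ∀ (σ : Finset I) (x : X), ‖∑ i ∈ σ, estar i x • e i‖ ≤ ‖x‖) (σ : Finset I) :
    ‖basisProjection e estar σ‖ ≤ 1 :=
  ContinuousLinearMap.opNorm_le_bound _ zero_le_one fun x => by
    rw [one_mul, basisProjection_apply]
    exact hmono σ x

theorem basisProjection_apply_basis_of_notMem
    (hbiorth : ∀ i j, i ≠ j → estar i (e j) = 0) {σ : Finset I} {j : I} (hj : j ∉ σ) :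
    basisProjection e estar σ (e j) = 0 := by
  rw [basisProjection_apply]
  refine Finset.sum_eq_zero fun i hi => ?_
  rw [hbiorth i j (ne_of_mem_of_not_mem hi hj), zero_smul]

end BasisProjection

theorem finite_support_boundary_general {X : Type*} [NormedAddCommGroup X] [NormedSpace ℝ X]
    {I : Type*} [DecidableEq I]
    (e : I → X) (estar : I → (X →L[ℝ] ℝ))
    (hbiorth : ∀ i j, estar i (e j) = if i = j then (1 : ℝ) else 0)
    (hmono : ∀ (σ : Finset I) (x : X), ‖∑ i ∈ σ, estar i x • e i‖ ≤ ‖x‖)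
    (hproj : ∀ x : X, ‖x‖ = 1 → ∃ σ : Finset I, ‖∑ i ∈ σ, estar i x • e i‖ = 1) :
    ∀ x : X, ‖x‖ = 1 →
      ∃ h : X →L[ℝ] ℝ, ‖h‖ ≤ 1 ∧ ({i : I | h (e i) ≠ 0}).Finite ∧ h x = 1 := by
  intro x hx
  obtain ⟨σ, hσ⟩ := hproj x hx
  obtain ⟨f, hf, hfx⟩ := exists_dual_comp_eq_one (opNorm_basisProjection_le e estar hmono σ)
    (x := x) (by rwa [basisProjection_apply])
  have hoff : ∀ i j, i ≠ j → estar i (e j) = 0 := fun i j hij => by rw [hbiorth, if_neg hij]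
  refine ⟨f.comp (basisProjection e estar σ), hf, σ.finite_toSet.subset fun j hj => ?_, hfx⟩
  by_contra hjσ
  exact hj (by simp [basisProjection_apply_basis_of_notMem e estar hoff hjσ])

/-- Corollary: if `X` has a monotone unconditional basis `(e_i)` (with biorthogonal
functionals `e_i*` and projections `P_σ x = Σ_{i∈σ} e_i*(x) e_i` of norm at most one)
and every norm-one `x` admits a finite `σ` with `‖P_σ x‖ = 1`, then
`H = ⋃ₙ Hₙ = { h ∈ B_{X*} : supp h finite }` is a boundary of `X`. -/
theorem finite_support_boundary {X : Type*} [NormedAddCommGroup X] [NormedSpace ℝ X]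
    [CompleteSpace X] {I : Type*} [DecidableEq I]
    (e : I → X) (estar : I → (X →L[ℝ] ℝ))
    (hbiorth : ∀ i j, estar i (e j) = if i = j then (1 : ℝ) else 0)
    (hdense : Dense (↑(Submodule.span ℝ (Set.range e)) : Set X))
    (hmono : ∀ (σ : Finset I) (x : X), ‖∑ i ∈ σ, estar i x • e i‖ ≤ ‖x‖)
    (hproj : ∀ x : X, ‖x‖ = 1 → ∃ σ : Finset I, ‖∑ i ∈ σ, estar i x • e i‖ = 1) :
    ∀ x : X, ‖x‖ = 1 →
      ∃ h : X →L[ℝ] ℝ, ‖h‖ ≤ 1 ∧ ({i : I | h (e i) ≠ 0}).Finite ∧ h x = 1 :=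
  finite_support_boundary_general e estar hbiorth hmono hproj
end

section
/- Each set H_n = { h ∈ B_{X*} : |supp(h)| ≤ n } is weak-*-compact, where supp(h) = { i ∈ I : h(e_i) ≠ 0 } for a Banach space X with a Schauder basis (e_i)_{i∈I}. In particular, H_n is a relative boundary of X. -/
/-- A set whose intersection with every `(n+1)`-element finset misses an element
is finite with at most `n` elements, and conversely. -/
lemma supp_le_iff {I : Type*} (T : Set I) (n : ℕ) :
    (T.Finite ∧ T.ncard ≤ n) ↔ ∀ s : Finset I, s.card = n + 1 → ¬(↑s ⊆ T) := by
  constructor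
  · rintro ⟨hfin, hcard⟩ s hs hsub
    have : s.card ≤ T.ncard := by
      have := Set.ncard_le_ncard hsub hfin
      simpa [Set.ncard_coe_finset] using this
    omega
  · intro h
    by_cases hfin : T.Finite
    · refine ⟨hfin, ?_⟩
      by_contra hlt
      push_neg at hlt
      obtain ⟨t, hts, htcard⟩ := Set.exists_subset_card_eq (show n + 1 ≤ T.ncard by omega)
      have htfin : t.Finite := hfin.subset hts
      refine h htfin.toFinset ?_ ?_
      · rw [Set.ncard_eq_toFinset_card t htfin] at htcard; exact htcard
      · intro i hi
        exact hts (by simpa using hi)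
    · exfalso
      obtain ⟨t, hts, htcard⟩ := Set.Infinite.exists_subset_card_eq hfin (n + 1)
      exact h t htcard hts

/-- The support-size condition is weak-*-closed. -/
lemma isClosed_supp_le {X : Type*} [NormedAddCommGroup X] [NormedSpace ℝ X]
    {I : Type*} (e : I → X) (n : ℕ) :
    IsClosed {h : WeakDual ℝ X | ({i : I | h (e i) ≠ 0}).Finite ∧
      ({i : I | h (e i) ≠ 0}).ncard ≤ n} := by
  have : {h : WeakDual ℝ X | ({i : I | h (e i) ≠ 0}).Finite ∧
      ({i : I | h (e i) ≠ 0}).ncard ≤ n} =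
      ⋂ (s : Finset I) (_ : s.card = n + 1), ⋃ i ∈ s, {h : WeakDual ℝ X | h (e i) = 0} := by
    ext h
    simp only [Set.mem_setOf_eq, Set.mem_iInter, Set.mem_iUnion, supp_le_iff]
    constructor
    · intro H s hs
      obtain ⟨i, hi, hiT⟩ := Set.not_subset.mp (H s hs)
      exact ⟨i, hi, not_not.mp hiT⟩
    · intro H s hs hsub
      obtain ⟨i, hi, hi0⟩ := H s hs
      exact hsub hi hi0
  rw [this]
  refine isClosed_iInter fun s => isClosed_iInter fun _ => ?_
  refine Set.Finite.isClosed_biUnion s.finite_toSet fun i _ => ?_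
  exact isClosed_singleton.preimage (WeakDual.eval_continuous (e i))

/-- For a Banach space `X` with a (Schauder) basis `(e_i)`, each set
`Hₙ = { h ∈ B_{X*} : |supp h| ≤ n }`, where `supp h = { i : h (e i) ≠ 0 }`, is
weak-*-compact; in particular it is a relative boundary of `X`. -/
theorem Hn_wstar_compact_relative_boundary {X : Type*} [NormedAddCommGroup X]
    [NormedSpace ℝ X] [CompleteSpace X] {I : Type*} (e : I → X) (n : ℕ) :
    @IsCompact _ (wstarTopology X)
      {h : X →L[ℝ] ℝ | ‖h‖ ≤ 1 ∧ ({i : I | h (e i) ≠ 0}).Finite ∧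
        ({i : I | h (e i) ≠ 0}).ncard ≤ n} ∧
    ∀ x : X,
      sSup {r : ℝ | ∃ h : X →L[ℝ] ℝ, (‖h‖ ≤ 1 ∧ ({i : I | h (e i) ≠ 0}).Finite ∧
          ({i : I | h (e i) ≠ 0}).ncard ≤ n) ∧ r = h x} = 1 →
        ∃ h : X →L[ℝ] ℝ, (‖h‖ ≤ 1 ∧ ({i : I | h (e i) ≠ 0}).Finite ∧
          ({i : I | h (e i) ≠ 0}).ncard ≤ n) ∧ h x = 1 := by
  have hcompact : IsCompact {h : WeakDual ℝ X | ‖WeakDual.toStrongDual h‖ ≤ 1 ∧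
      ({i : I | h (e i) ≠ 0}).Finite ∧ ({i : I | h (e i) ≠ 0}).ncard ≤ n} := by
    have hset : {h : WeakDual ℝ X | ‖WeakDual.toStrongDual h‖ ≤ 1 ∧
        ({i : I | h (e i) ≠ 0}).Finite ∧ ({i : I | h (e i) ≠ 0}).ncard ≤ n} =
        (WeakDual.toStrongDual ⁻¹' Metric.closedBall 0 1) ∩
        {h : WeakDual ℝ X | ({i : I | h (e i) ≠ 0}).Finite ∧
          ({i : I | h (e i) ≠ 0}).ncard ≤ n} := by
      ext h
      simp [mem_closedBall_zero_iff, and_assoc]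
    rw [hset]
    exact (WeakDual.isCompact_closedBall (𝕜 := ℝ) (E := X) 0 1).inter_right (isClosed_supp_le e n)
  constructor
  · exact hcompact
  · intro x hsup
    have hne : ({h : WeakDual ℝ X | ‖WeakDual.toStrongDual h‖ ≤ 1 ∧
        ({i : I | h (e i) ≠ 0}).Finite ∧ ({i : I | h (e i) ≠ 0}).ncard ≤ n}).Nonempty := by
      have hz : ∀ i : I, (0 : WeakDual ℝ X) (e i) = 0 := fun i => rfl
      have h0 : {i : I | (0 : WeakDual ℝ X) (e i) ≠ 0} = ∅ := by
        ext i; simp [hz i]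
      refine ⟨(0 : WeakDual ℝ X), ?_, ?_, ?_⟩ <;> simp [h0]
    have himg : IsCompact ((fun h : WeakDual ℝ X => h x) ''
        {h : WeakDual ℝ X | ‖WeakDual.toStrongDual h‖ ≤ 1 ∧
          ({i : I | h (e i) ≠ 0}).Finite ∧ ({i : I | h (e i) ≠ 0}).ncard ≤ n}) :=
      hcompact.image (WeakDual.eval_continuous x)
    have heq : {r : ℝ | ∃ h : X →L[ℝ] ℝ, (‖h‖ ≤ 1 ∧ ({i : I | h (e i) ≠ 0}).Finite ∧
          ({i : I | h (e i) ≠ 0}).ncard ≤ n) ∧ r = h x} =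
        (fun h : WeakDual ℝ X => h x) ''
        {h : WeakDual ℝ X | ‖WeakDual.toStrongDual h‖ ≤ 1 ∧
          ({i : I | h (e i) ≠ 0}).Finite ∧ ({i : I | h (e i) ≠ 0}).ncard ≤ n} := by
      ext r
      constructor
      · rintro ⟨h, hP, rfl⟩
        exact ⟨h, hP, rfl⟩
      · rintro ⟨h, hP, rfl⟩
        exact ⟨h, hP, rfl⟩
    rw [heq] at hsup
    have := himg.sSup_mem (hne.image _)
    rw [hsup] at this
    obtain ⟨h, hP, hx⟩ := this
    exact ⟨h, hP, hx⟩
end
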